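/- Let C1, C2 ⊆ F4^ℓ be nonzero linear codes with minimum Hamming distances d1, d2 satisfying d2 ≥ d_sr, where d_sr is the minimum sum-rank distance of SR(C1,C2). Then for every codeword c = a1*x + a2*x^2 ∈ SR(C1,C2) and error e = e1*x + e2*x^2 with wt_sr(e) ≤ ⌊(d_sr−1)/2⌋: (i) a2 is the unique codeword of C2 within Hamming distance ⌊(d2−1)/2⌋ of a2 + e2, and (ii) a1 is the unique codeword of C1 agreeing with a1 + e1 outside J = supp(e2) up to t = |{i∉J : e1_i ≠ 0}| errors, where 2t + |J| < d1. -/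

import Mathlib

open scoped Classical

noncomputable section

/-- The field with 4 elements. -/
abbrev F4 := GaloisField 2 2

noncomputable instance : Fintype F4 := Fintype.ofFinite _

/-- The `F2`-linear map `x ↦ x1*x + x2*x^2` on `F4`. -/
noncomputable def Lmap (x1 x2 : F4) : F4 →ₗ[ZMod 2] F4 where
  toFun x := x1 * x + x2 * x ^ 2
  map_add' x y := by
    have h : (x + y) ^ 2 = x ^ 2 + y ^ 2 := add_pow_char x y 2
    try simp only []
    rw [h]; ring
  map_smul' c x := by
    have hc : c ^ 2 = c := ZMod.pow_card c
    simp only [Algebra.smul_def, RingHom.id_apply, mul_pow, ← map_pow, hc]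
    ring

/-- `F2`-rank of an `F2`-linear endomorphism of `F4`. -/
noncomputable def rk (f : F4 →ₗ[ZMod 2] F4) : ℕ :=
  Module.finrank (ZMod 2) (LinearMap.range f)

/-- Sum-rank weight of `a1*x + a2*x^2`. -/
noncomputable def srWt {ℓ : ℕ} (a1 a2 : Fin ℓ → F4) : ℕ :=
  ∑ i, rk (Lmap (a1 i) (a2 i))


lemma F4_finrank : Module.finrank (ZMod 2) F4 = 2 := GaloisField.finrank 2 (by norm_num)

lemma F4_card : Fintype.card F4 = 4 := by
  have := GaloisField.card (p := 2) 2 (by norm_num)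
  rw [Nat.card_eq_fintype_card] at this
  simpa using this

lemma Lmap_apply (x1 x2 x : F4) : Lmap x1 x2 x = x1 * x + x2 * x ^ 2 := rfl

lemma exists_omega : ∃ ω : F4, ω ≠ 0 ∧ ω ≠ 1 := by
  by_contra h
  push_neg at h
  have hsub : (Finset.univ : Finset F4) ⊆ {0, 1} := by
    intro x _
    rcases Classical.em (x = 0) with h0 | h0
    · simp [h0]
    · simp [h x h0]
  have := Finset.card_le_card hsub
  rw [Finset.card_univ, F4_card] at this
  have h2 : ({0, 1} : Finset F4).card ≤ 2 := (Finset.card_insert_le _ _).trans (by simp)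
  omega

lemma Lmap_eq_zero {x1 x2 : F4} (h : Lmap x1 x2 = 0) : x1 = 0 ∧ x2 = 0 := by
  obtain ⟨ω, hω0, hω1⟩ := exists_omega
  have h1 : x1 + x2 = 0 := by
    have := congrArg (fun f => f 1) h
    simpa [Lmap_apply] using this
  have h21 : x2 = x1 := by
    have : x2 = -x1 := by linear_combination h1
    rwa [CharTwo.neg_eq] at this
  have hω : x1 * ω + x1 * ω ^ 2 = 0 := by
    have := congrArg (fun f => f ω) h
    simpa [Lmap_apply, h21] using this
  have hfac : x1 * (ω * (1 + ω)) = 0 := by ring_nf; ring_nf at hω; linear_combination hω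
  have hne : ω * (1 + ω) ≠ 0 := by
    apply mul_ne_zero hω0
    intro hc
    apply hω1
    have : ω = -1 := by linear_combination hc
    rwa [CharTwo.neg_eq] at this
  have hx1 : x1 = 0 := by
    rcases mul_eq_zero.mp hfac with h | h
    · exact h
    · exact absurd h hne
  exact ⟨hx1, h21.trans hx1⟩

lemma rk_le_two (f : F4 →ₗ[ZMod 2] F4) : rk f ≤ 2 := by
  have := Submodule.finrank_le (LinearMap.range f)
  rwa [F4_finrank] at this

lemma rk_zero : rk (0 : F4 →ₗ[ZMod 2] F4) = 0 := by
  rw [rk, LinearMap.range_zero, finrank_bot]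

lemma rk_pos {x1 x2 : F4} (h : ¬(x1 = 0 ∧ x2 = 0)) : 1 ≤ rk (Lmap x1 x2) := by
  rw [Nat.one_le_iff_ne_zero]
  intro h0
  have hbot : LinearMap.range (Lmap x1 x2) = ⊥ := Submodule.finrank_eq_zero.mp h0
  exact h (Lmap_eq_zero (LinearMap.range_eq_bot.mp hbot))

lemma rk_two {x1 : F4} (h : x1 ≠ 0) : rk (Lmap x1 0) = 2 := by
  have hker : LinearMap.ker (Lmap x1 0) = ⊥ := by
    rw [LinearMap.ker_eq_bot]
    intro a b hab
    simp only [Lmap_apply, zero_mul, add_zero] at hab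
    exact mul_left_cancel₀ h hab
  have := LinearMap.finrank_range_add_finrank_ker (Lmap x1 0)
  rw [hker, finrank_bot, add_zero, F4_finrank] at this
  exact this

open Finset in
lemma key_le {ℓ : ℕ} (e1 e2 : Fin ℓ → F4) :
    2 * (Finset.univ.filter (fun i => e1 i ≠ 0 ∧ e2 i = 0)).card +
      (Finset.univ.filter (fun i => e2 i ≠ 0)).card ≤ srWt e1 e2 := by
  rw [Finset.card_filter, Finset.card_filter, srWt, Finset.mul_sum, ← Finset.sum_add_distrib]
  apply Finset.sum_le_sum
  intro i _
  by_cases h2 : e2 i = 0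
  · by_cases h1 : e1 i = 0
    · rw [if_neg (by simp [h1]), if_neg (by simp [h2])]
      simp
    · rw [if_pos (show e1 i ≠ 0 ∧ e2 i = 0 from ⟨h1, h2⟩), if_neg (by simp [h2])]
      have hrk : rk (Lmap (e1 i) (e2 i)) = 2 := by rw [h2]; exact rk_two h1
      omega
  · rw [if_neg (fun hc => h2 hc.2), if_pos h2]
    have hrk : 1 ≤ rk (Lmap (e1 i) (e2 i)) := rk_pos (fun hc => h2 hc.2)
    omega

lemma srWt_c0_le {ℓ : ℕ} (c : Fin ℓ → F4) : srWt c 0 ≤ 2 * hammingNorm c := by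
  rw [srWt, hammingNorm, Finset.card_filter, Finset.mul_sum]
  apply Finset.sum_le_sum
  intro i _
  by_cases h : c i = 0
  · have hL : Lmap (c i) ((0 : Fin ℓ → F4) i) = 0 := by
      ext x; simp [Lmap_apply, h]
    rw [hL, rk_zero, if_neg (by simp [h])]
    simp
  · rw [if_pos h]
    have := rk_le_two (Lmap (c i) ((0 : Fin ℓ → F4) i))
    omega

lemma srWt_pos {ℓ : ℕ} {u1 u2 : Fin ℓ → F4} (h : (u1, u2) ≠ (0, 0)) : 1 ≤ srWt u1 u2 := by
  rw [Nat.one_le_iff_ne_zero]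
  intro h0
  apply h
  rw [srWt, Finset.sum_eq_zero_iff] at h0
  have hz : ∀ i, u1 i = 0 ∧ u2 i = 0 := by
    intro i
    have := h0 i (Finset.mem_univ i)
    have hbot : LinearMap.range (Lmap (u1 i) (u2 i)) = ⊥ := Submodule.finrank_eq_zero.mp this
    exact Lmap_eq_zero (LinearMap.range_eq_bot.mp hbot)
  ext1
  · funext i; exact (hz i).1
  · funext i; exact (hz i).2

theorem stmt14 {ℓ : ℕ} (C1 C2 : Submodule F4 (Fin ℓ → F4))
    (hC1 : C1 ≠ ⊥) (hC2 : C2 ≠ ⊥) (d1 d2 dsr : ℕ)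
    (hd1 : IsLeast {w | ∃ c ∈ C1, c ≠ 0 ∧ hammingNorm c = w} d1)
    (hd2 : IsLeast {w | ∃ c ∈ C2, c ≠ 0 ∧ hammingNorm c = w} d2)
    (hdsr : IsLeast {w | ∃ a1 ∈ C1, ∃ a2 ∈ C2, (a1, a2) ≠ (0, 0) ∧ srWt a1 a2 = w} dsr)
    (h2 : dsr ≤ d2)
    (a1 a2 e1 e2 : Fin ℓ → F4) (ha1 : a1 ∈ C1) (ha2 : a2 ∈ C2)
    (he : srWt e1 e2 ≤ (dsr - 1) / 2) :
    (hammingDist a2 (a2 + e2) ≤ (d2 - 1) / 2 ∧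
      ∀ b2 ∈ C2, hammingDist b2 (a2 + e2) ≤ (d2 - 1) / 2 → b2 = a2) ∧
    (2 * (Finset.univ.filter (fun i => e1 i ≠ 0 ∧ e2 i = 0)).card +
        (Finset.univ.filter (fun i => e2 i ≠ 0)).card < d1 ∧
      (Finset.univ.filter (fun i => e2 i = 0 ∧ a1 i ≠ (a1 + e1) i)).card ≤
        (Finset.univ.filter (fun i => e1 i ≠ 0 ∧ e2 i = 0)).card ∧
      ∀ b1 ∈ C1,
        (Finset.univ.filter (fun i => e2 i = 0 ∧ b1 i ≠ (a1 + e1) i)).card ≤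
          (Finset.univ.filter (fun i => e1 i ≠ 0 ∧ e2 i = 0)).card →
        b1 = a1) := by

  classical
  set t := (Finset.univ.filter (fun i => e1 i ≠ 0 ∧ e2 i = 0)).card with ht
  set r := (Finset.univ.filter (fun i : Fin ℓ => e2 i ≠ 0)).card with hr
  have hkey : 2 * t + r ≤ srWt e1 e2 := key_le e1 e2
  obtain ⟨c, hc, hc0, hcd⟩ := hd1.1
  have hd1pos : 1 ≤ d1 := by
    rw [← hcd, Nat.one_le_iff_ne_zero]
    exact fun h => hc0 (hammingNorm_eq_zero.mp h)
  obtain ⟨c2, hc2, hc20, hc2d⟩ := hd2.1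
  have hd2pos : 1 ≤ d2 := by
    rw [← hc2d, Nat.one_le_iff_ne_zero]
    exact fun h => hc20 (hammingNorm_eq_zero.mp h)
  have hmem : srWt c 0 ∈ {w | ∃ a1 ∈ C1, ∃ a2 ∈ C2, (a1, a2) ≠ (0, 0) ∧ srWt a1 a2 = w} :=
    ⟨c, hc, 0, C2.zero_mem, by simp only [ne_eq, Prod.mk.injEq, not_and]; exact fun h _ => hc0 h, rfl⟩
  have hdsr2d1 : dsr ≤ 2 * d1 := le_trans (hdsr.2 hmem) (hcd ▸ srWt_c0_le c)
  have hrd2 : r ≤ (d2 - 1) / 2 := by omega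
  have hdist : hammingDist a2 (a2 + e2) = r := by
    unfold hammingDist
    rw [hr]
    congr 1
    ext i
    simp [Pi.add_apply, left_eq_add]
  refine ⟨⟨hdist ▸ hrd2, ?_⟩, ?_, ?_, ?_⟩
  · -- uniqueness for C2
    intro b2 hb2 hb
    by_contra hne
    have hmem2 : d2 ≤ hammingNorm (b2 - a2) :=
      hd2.2 ⟨b2 - a2, sub_mem hb2 ha2, sub_ne_zero.mpr hne, rfl⟩
    have htri : hammingDist b2 a2 ≤ hammingDist b2 (a2 + e2) + hammingDist (a2 + e2) a2 :=
      hammingDist_triangle _ _ _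
    rw [hammingDist_comm (a2 + e2) a2, hdist] at htri
    have heq : hammingDist b2 a2 = hammingNorm (b2 - a2) := by
      rw [hammingDist_comm, hammingDist_eq_hammingNorm, neg_add_eq_sub]
    omega
  · -- 2t + r < d1
    omega
  · -- t-set equality
    apply le_of_eq
    rw [ht]
    congr 1
    ext i
    simp only [Finset.mem_filter, Pi.add_apply, left_eq_add, ne_eq]
    tauto
  · -- uniqueness for C1
    intro b1 hb1 hb
    by_contra hne
    have hmem1 : d1 ≤ hammingNorm (b1 - a1) :=
      hd1.2 ⟨b1 - a1, sub_mem hb1 ha1, sub_ne_zero.mpr hne, rfl⟩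
    have hnorm : hammingNorm (b1 - a1) = (Finset.univ.filter (fun i => b1 i ≠ a1 i)).card := by
      unfold hammingNorm
      congr 1
      ext i
      simp [sub_eq_zero]
    have hsub : (Finset.univ.filter (fun i => b1 i ≠ a1 i)) ⊆
        ((Finset.univ.filter (fun i : Fin ℓ => e2 i ≠ 0)) ∪
          (Finset.univ.filter (fun i => e2 i = 0 ∧ b1 i ≠ (a1 + e1) i))) ∪
          (Finset.univ.filter (fun i => e1 i ≠ 0 ∧ e2 i = 0)) := by
      intro i hi
      simp only [Finset.mem_filter, Finset.mem_union, Finset.mem_univ, true_and,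
        Pi.add_apply, ne_eq] at *
      by_cases h2' : e2 i = 0
      · by_cases hbe : b1 i = a1 i + e1 i
        · refine Or.inr ⟨fun h1 => ?_, h2'⟩
          rw [h1, add_zero] at hbe
          exact hi hbe
        · exact Or.inl (Or.inr ⟨h2', hbe⟩)
      · exact Or.inl (Or.inl h2')
    have hcard := Finset.card_le_card hsub
    have hu1 := Finset.card_union_le
      ((Finset.univ.filter (fun i : Fin ℓ => e2 i ≠ 0)) ∪
        (Finset.univ.filter (fun i => e2 i = 0 ∧ b1 i ≠ (a1 + e1) i)))
      (Finset.univ.filter (fun i => e1 i ≠ 0 ∧ e2 i = 0))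
    have hu2 := Finset.card_union_le
      (Finset.univ.filter (fun i : Fin ℓ => e2 i ≠ 0))
      (Finset.univ.filter (fun i => e2 i = 0 ∧ b1 i ≠ (a1 + e1) i))
    omega
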